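/- Let d ≥ 2, κ ∈ ℝ^d, and let Λ ∈ ℝ^{d×d} be symmetric with Λ_{ii} = 0 for all i, such that for every i ∈ {1,…,d} there exists j ≠ i with Λ_{ij} ≠ 0. Let C > 0 and define the multivariate Sine density f(θ) = C · exp(Σ_{i=1}^d κᵢ cos(θᵢ) + (1/2) Σ_{i=1}^d Σ_{j=1}^d Λ_{ij} sin(θᵢ) sin(θⱼ)) for θ ∈ ℝ^d. If α, β ∈ ℝ^d satisfy Σ_{i=1}^d αᵢ ∂f/∂θᵢ(θ) = f(θ) Σ_{i=1}^d βᵢ sin(θᵢ) for all θ ∈ ℝ^d, then α = 0 and β = 0. -/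

import Mathlib

/-!
Since `f > 0`, the hypothesis says `α ⬝ᵥ ∇g(θ) = β ⬝ᵥ sin θ` for the exponent `g` of `f`, whose
gradient is `∂ᵢg = -κᵢ sin θᵢ + cos θᵢ (Λ sin θ)ᵢ` when `Λ` is symmetric. The reflection
`θᵢ ↦ π - θᵢ` fixes `sin θ` and flips the sign of `cos θᵢ` only, so `αᵢ cos θᵢ (Λ sin θ)ᵢ = 0`
for every `θ`; at `θ = (π/2) eⱼ` this reads `αᵢ Λᵢⱼ = 0`, hence `α = 0` by choosing `Λᵢⱼ ≠ 0`.
Then `β ⬝ᵥ sin θ = 0` for all `θ`, and `θ = (π/2) eᵢ` gives `βᵢ = 0`.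
-/

open Real Finset Matrix

section

variable {ι : Type*}

theorem sin_comp_single [DecidableEq ι] (j : ι) (x : ℝ) :
    sin ∘ Pi.single j x = Pi.single j (sin x) :=
  funext (Pi.apply_single (fun _ => sin) (fun _ => sin_zero) j x)

theorem sin_comp_update_pi_sub [DecidableEq ι] (θ : ι → ℝ) (i : ι) :
    sin ∘ Function.update θ i (π - θ i) = sin ∘ θ := by
  ext k
  rcases eq_or_ne k i with rfl | hk
  · simp [sin_pi_sub]
  · simp [hk]

variable [Fintype ι]

noncomputable def sineExponent (κ : ι → ℝ) (Λ : Matrix ι ι ℝ) (θ : ι → ℝ) : ℝ :=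
  ∑ i, κ i * cos (θ i) + (1 / 2) * ∑ i, ∑ j, Λ i j * sin (θ i) * sin (θ j)

noncomputable def sineGradient (κ : ι → ℝ) (Λ : Matrix ι ι ℝ) (θ : ι → ℝ) : ι → ℝ :=
  -(κ * (sin ∘ θ)) + (cos ∘ θ) * (Λ *ᵥ (sin ∘ θ))

theorem hasFDerivAt_sineExponent {κ : ι → ℝ} {Λ : Matrix ι ι ℝ} (hΛ : Λ.IsSymm) (θ : ι → ℝ) :
    HasFDerivAt (sineExponent κ Λ)
      (∑ i, sineGradient κ Λ θ i • ContinuousLinearMap.proj (R := ℝ) (φ := fun _ : ι => ℝ) i) θ := by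
  have hsin k : HasFDerivAt (fun θ : ι → ℝ => sin (θ k)) (cos (θ k) • ContinuousLinearMap.proj k) θ :=
    (hasFDerivAt_apply k θ).sin
  have hcos k : HasFDerivAt (fun θ : ι → ℝ => cos (θ k)) (-sin (θ k) • ContinuousLinearMap.proj k) θ :=
    (hasFDerivAt_apply k θ).cos
  have hraw := (HasFDerivAt.fun_sum (u := univ) fun k _ => (hcos k).const_mul (κ k)).add
    ((HasFDerivAt.fun_sum (u := univ) fun k _ => HasFDerivAt.fun_sum (u := univ) fun l _ =>
      ((hsin k).const_mul (Λ k l)).fun_mul (hsin l)).const_mul (1 / 2 : ℝ))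
  refine hraw.congr_fderiv (ContinuousLinearMap.ext fun v => ?_)
  simp only [one_div, sum_add_distrib, smul_add, _root_.add_apply,
    _root_.sum_apply, _root_.smul_apply, ContinuousLinearMap.proj_apply,
    smul_eq_mul, neg_mul, mul_neg, sum_neg_distrib, mul_sum, sineGradient, Pi.add_apply,
    Pi.neg_apply, Pi.mul_apply, Function.comp_apply, mulVec, dotProduct]
  have hswap : ∑ k, ∑ l, 2⁻¹ * (Λ k l * sin (θ k) * (cos (θ l) * v l)) =
      ∑ k, ∑ l, 2⁻¹ * (sin (θ l) * (Λ k l * (cos (θ k) * v k))) := by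
    rw [sum_comm]
    exact sum_congr rfl fun k _ => sum_congr rfl fun l _ => by rw [hΛ.apply]; ring
  rw [hswap, ← sum_neg_distrib, ← sum_add_distrib, ← sum_add_distrib]
  refine sum_congr rfl fun k _ => ?_
  rw [← sum_add_distrib, add_mul, sum_mul]
  congr 1
  · ring
  · exact sum_congr rfl fun l _ => by ring

variable [DecidableEq ι]

theorem sineGradient_sub_sineGradient_update_pi_sub (κ : ι → ℝ) (Λ : Matrix ι ι ℝ) (θ : ι → ℝ)
    (i : ι) :
    sineGradient κ Λ θ - sineGradient κ Λ (Function.update θ i (π - θ i)) =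
      Pi.single i (2 * cos (θ i) * (Λ *ᵥ (sin ∘ θ)) i) := by
  ext k
  rcases eq_or_ne k i with rfl | hk
  · simp [sineGradient, sin_comp_update_pi_sub, cos_pi_sub]
    ring
  · simp [sineGradient, sin_comp_update_pi_sub, hk]

variable {κ : ι → ℝ} {Λ : Matrix ι ι ℝ} {α β : ι → ℝ}

theorem mul_cos_mul_mulVec_sin_eq_zero (h : ∀ θ, α ⬝ᵥ sineGradient κ Λ θ = β ⬝ᵥ (sin ∘ θ))
    (θ : ι → ℝ) (i : ι) : α i * (cos (θ i) * (Λ *ᵥ (sin ∘ θ)) i) = 0 := by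
  have hdiff := congrArg₂ (· - ·) (h θ) (h (Function.update θ i (π - θ i)))
  simp only [← dotProduct_sub, sineGradient_sub_sineGradient_update_pi_sub,
    sin_comp_update_pi_sub, sub_self, dotProduct_single] at hdiff
  linarith

theorem eq_zero_of_forall_dotProduct_sineGradient_eq (hrow : ∀ i, ∃ j, j ≠ i ∧ Λ i j ≠ 0)
    (h : ∀ θ, α ⬝ᵥ sineGradient κ Λ θ = β ⬝ᵥ (sin ∘ θ)) : α = 0 ∧ β = 0 := by
  have hα : α = 0 := by
    ext i
    obtain ⟨j, hji, hΛ⟩ := hrow i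
    have := mul_cos_mul_mulVec_sin_eq_zero h (Pi.single j (π / 2)) i
    rw [sin_comp_single, sin_pi_div_two, mulVec_single_one, Pi.single_eq_of_ne hji.symm, cos_zero,
      one_mul] at this
    exact (mul_eq_zero.1 this).resolve_right hΛ
  refine ⟨hα, funext fun i => ?_⟩
  have := h (Pi.single i (π / 2))
  rwa [hα, zero_dotProduct, sin_comp_single, sin_pi_div_two, dotProduct_single, mul_one,
    eq_comm] at this

end

theorem stmt12_general (d : ℕ) (κ : Fin d → ℝ)
    (Λ : Matrix (Fin d) (Fin d) ℝ) (hsymm : Λ.IsSymm)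
    (hrow : ∀ i : Fin d, ∃ j : Fin d, j ≠ i ∧ Λ i j ≠ 0)
    (C : ℝ) (hC : 0 < C) (f : (Fin d → ℝ) → ℝ)
    (hf : ∀ θ : Fin d → ℝ, f θ = C * Real.exp (∑ i, κ i * Real.cos (θ i) +
      (1 / 2) * ∑ i, ∑ j, Λ i j * Real.sin (θ i) * Real.sin (θ j)))
    (α β : Fin d → ℝ)
    (h : ∀ θ : Fin d → ℝ, ∑ i, α i * fderiv ℝ f θ (Pi.single i 1) =
      f θ * ∑ i, β i * Real.sin (θ i)) :
    α = 0 ∧ β = 0 := by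
  have hf' : f = fun θ => C * exp (sineExponent κ Λ θ) := funext hf
  have hpartial θ i : fderiv ℝ f θ (Pi.single i 1) = f θ * sineGradient κ Λ θ i := by
    rw [hf', ((hasFDerivAt_sineExponent hsymm θ).exp.const_mul C).fderiv]
    simp [Pi.single_apply, mul_assoc]
  have hgrad θ : α ⬝ᵥ sineGradient κ Λ θ = β ⬝ᵥ (sin ∘ θ) := by
    have hfθ : f θ ≠ 0 := by rw [hf]; positivity
    refine mul_left_cancel₀ hfθ ?_
    simpa [hpartial, dotProduct, mul_sum, mul_left_comm] using h θ
  exact eq_zero_of_forall_dotProduct_sineGradient_eq hrow hgrad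

theorem stmt12 (d : ℕ) (hd : 2 ≤ d) (κ : Fin d → ℝ)
    (Λ : Matrix (Fin d) (Fin d) ℝ) (hsymm : Λ.IsSymm) (hdiag : ∀ i, Λ i i = 0)
    (hrow : ∀ i : Fin d, ∃ j : Fin d, j ≠ i ∧ Λ i j ≠ 0)
    (C : ℝ) (hC : 0 < C) (f : (Fin d → ℝ) → ℝ)
    (hf : ∀ θ : Fin d → ℝ, f θ = C * Real.exp (∑ i, κ i * Real.cos (θ i) +
      (1 / 2) * ∑ i, ∑ j, Λ i j * Real.sin (θ i) * Real.sin (θ j)))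
    (α β : Fin d → ℝ)
    (h : ∀ θ : Fin d → ℝ, ∑ i, α i * fderiv ℝ f θ (Pi.single i 1) =
      f θ * ∑ i, β i * Real.sin (θ i)) :
    α = 0 ∧ β = 0 :=
  stmt12_general d κ Λ hsymm hrow C hC f hf α β h
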